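/- If k is odd with 3 ≤ k ≤ n and M is a set of edges of K_n with |M| ≥ (k+1)/2, then the generalized k-edge-connectivity of K_n \ M is strictly less than n − (k+1)/2. -/

import Mathlib

open SimpleGraph

variable {V : Type*}

/-- An `S`-Steiner tree in `G`: a subgraph of `G` that is a tree and contains all of `S`. -/
def IsSteinerTree (G : SimpleGraph V) (S : Set V) (T : G.Subgraph) : Prop :=
  S ⊆ T.verts ∧ T.coe.IsTree

/-- The maximum number of pairwise edge-disjoint `S`-Steiner trees in `G`. -/
noncomputable def steinerEdgeConn (G : SimpleGraph V) (S : Set V) : ℕ :=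
  sSup {n : ℕ | ∃ f : Fin n → G.Subgraph, (∀ i, IsSteinerTree G S (f i)) ∧
    ∀ i j, i ≠ j → Disjoint (f i).edgeSet (f j).edgeSet}

/-- The maximum number of pairwise internally disjoint `S`-Steiner trees in `G`. -/
noncomputable def steinerConn (G : SimpleGraph V) (S : Set V) : ℕ :=
  sSup {n : ℕ | ∃ f : Fin n → G.Subgraph, (∀ i, IsSteinerTree G S (f i)) ∧
    ∀ i j, i ≠ j → Disjoint (f i).edgeSet (f j).edgeSet ∧
      (f i).verts ∩ (f j).verts = S}

/-- The generalized `k`-edge-connectivity `λ_k(G)`. -/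
noncomputable def genEdgeConn (G : SimpleGraph V) (k : ℕ) : ℕ :=
  sInf {m : ℕ | ∃ S : Set V, S.ncard = k ∧ steinerEdgeConn G S = m}

/-- The generalized `k`-connectivity `κ_k(G)`. -/
noncomputable def genConn (G : SimpleGraph V) (k : ℕ) : ℕ :=
  sInf {m : ℕ | ∃ S : Set V, S.ncard = k ∧ steinerConn G S = m}

/-- The edge-connectivity `λ(G)`: the least size of a set of edges whose removal
disconnects the graph. -/
noncomputable def edgeConn (G : SimpleGraph V) : ℕ :=
  sInf {m : ℕ | ∃ M : Set (Sym2 V), M ⊆ G.edgeSet ∧ M.ncard = m ∧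
    ¬ (G.deleteEdges M).Connected}

/-- The vertex-connectivity `κ(G)`: the least size of a set of vertices whose removal
leaves a non-connected graph. -/
noncomputable def vertConn (G : SimpleGraph V) : ℕ :=
  sInf {m : ℕ | ∃ A : Set V, A.ncard = m ∧ ¬ (G.induce (Aᶜ : Set V)).Connected}


/-- The minimum degree `δ(G)` (as the least cardinality of a neighbor set). -/
noncomputable def minDeg (G : SimpleGraph V) : ℕ :=
  sInf {d : ℕ | ∃ v : V, (G.neighborSet v).ncard = d}

/-!
Write `k = 2j + 1`. Pick `j + 1` edges of `M` and a `k`-set `S` containing an endpoint of each.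
In `K_n` exactly `C(k,2) + k(n-k) = k(n-j-1)` edges meet `S`, so at most `k(n-j-1) - (j+1)` edges
of `G = K_n \ M` do. A Steiner tree with vertex set exactly `S` has `k - 1` edges, all inside `S`;
any other Steiner tree contains an outside vertex `u`, and sending each `v ∈ S` to the first edge
of a shortest path from `v` to `u` gives `k` distinct tree edges meeting `S`. As `K_S` has only
`kj` edges, at most `j` of `t` edge-disjoint Steiner trees span exactly `S`, hence
`tk - j ≤ k(n-j-1) - (j+1)`, i.e. `t < n - j - 1`.
-/

lemma Nat.add_choose_two (a b : ℕ) : (a + b).choose 2 = a.choose 2 + b.choose 2 + a * b := by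
  induction b with
  | zero => simp
  | succ b ih =>
    rw [← Nat.add_assoc, Nat.choose_succ_succ', Nat.choose_succ_succ', ih, Nat.choose_one_right,
      Nat.choose_one_right]
    ring

lemma Nat.choose_two_two_mul_add_one (j : ℕ) : (2 * j + 1).choose 2 = (2 * j + 1) * j := by
  rw [Nat.choose_two_right, Nat.add_sub_cancel, mul_left_comm, Nat.mul_div_cancel_left _ two_pos]

lemma Set.sum_ncard_le_ncard_of_pairwiseDisjoint {ι α : Type*} {I : Finset ι} {s : ι → Set α}
    {X : Set α} (hX : X.Finite) (hs : (I : Set ι).PairwiseDisjoint s)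
    (hsX : ∀ i ∈ I, s i ⊆ X) :
    ∑ i ∈ I, (s i).ncard ≤ X.ncard := by
  rw [← finsum_mem_coe_finset, ← Set.Finite.ncard_biUnion I.finite_toSet
    (fun i hi => hX.subset (hsX i hi)) hs]
  exact Set.ncard_le_ncard (Set.iUnion₂_subset hsX) hX

lemma Set.disjoint_sym2_sym2_compl {α : Type*} (S : Set α) : Disjoint S.sym2 Sᶜ.sym2 := by
  rw [Set.disjoint_iff_inter_eq_empty, ← Set.sym2_inter, Set.inter_compl_self, Set.sym2_empty]

lemma Set.exists_ncard_eq_disjoint_sym2_compl [Finite V] {M : Set (Sym2 V)} {k : ℕ}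
    (hM : M.ncard ≤ k) (hk : k ≤ Nat.card V) :
    ∃ S : Set V, S.ncard = k ∧ Disjoint M Sᶜ.sym2 := by
  obtain ⟨S, hS, -, hScard⟩ := Set.exists_subsuperset_card_eq
    (Set.subset_univ ((fun e : Sym2 V => e.out.1) '' M))
    ((Set.ncard_image_le (Set.toFinite M)).trans hM) (by rwa [Set.ncard_univ])
  refine ⟨S, hScard, Set.disjoint_left.2 fun e he heS => ?_⟩
  exact Set.mem_sym2_iff_subset.1 heS (Sym2.out_fst_mem e) (hS ⟨e, he, rfl⟩)

namespace SimpleGraph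

lemma Reachable.exists_adj_dist_lt {G : SimpleGraph V} {a u : V} (h : G.Reachable a u)
    (hne : a ≠ u) : ∃ b, G.Adj a b ∧ G.dist b u < G.dist a u := by
  obtain ⟨p, -, hp⟩ := h.exists_path_of_dist
  cases p with
  | nil => exact absurd rfl hne
  | cons hadj q =>
    refine ⟨_, hadj, ?_⟩
    have := G.dist_le q
    simp only [Walk.length_cons] at hp
    omega

lemma ncard_le_ncard_edgeSet_sdiff_sym2_compl [Finite V] {G : SimpleGraph V} {A : Set V} {u : V}
    (hu : u ∉ A) (hA : ∀ a ∈ A, G.Reachable a u) :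
    A.ncard ≤ (G.edgeSet \ Aᶜ.sym2).ncard := by
  choose! next hadj hlt using fun a ha =>
    (hA a ha).exists_adj_dist_lt (ne_of_mem_of_not_mem ha hu)
  refine Set.ncard_le_ncard_of_injOn (fun a => s(a, next a)) (fun a ha => ⟨hadj a ha, ?_⟩) ?_
    (Set.toFinite _)
  · exact fun h => (Set.mk_mem_sym2_iff.1 h).1 ha
  · intro a ha a' ha' h
    rcases Sym2.eq_iff.1 h with ⟨h₁, -⟩ | ⟨h₁, h₂⟩
    · exact h₁
    · -- `a` and `a'` would each be the other's successor, but the distance to `u` drops strictly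
      have := hlt a ha
      have := hlt a' ha'
      rw [← h₁] at this
      rw [h₂] at *
      omega

lemma ncard_edgeSet_top_inter_sym2 (s : Set V) :
    ((⊤ : SimpleGraph V).edgeSet ∩ s.sym2).ncard = s.ncard.choose 2 := by
  have hsym2 : s.sym2 = Sym2.map ((↑) : s → V) '' Set.univ := by
    simpa using Set.sym2_image (f := Subtype.val) (s := (Set.univ : Set s))
  have himage : (⊤ : SimpleGraph V).edgeSet ∩ s.sym2 =
      Sym2.map Subtype.val '' (⊤ : SimpleGraph s).edgeSet := by
    ext e
    simp only [hsym2, edgeSet_top, Set.mem_inter_iff, Set.mem_compl_iff, Sym2.mem_diagSet,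
      Set.mem_image, Set.mem_univ, true_and]
    constructor
    · rintro ⟨hdiag, x, rfl⟩
      exact ⟨x, by simpa [Sym2.isDiag_map Subtype.val_injective] using hdiag, rfl⟩
    · rintro ⟨x, hx, rfl⟩
      exact ⟨by simpa [Sym2.isDiag_map Subtype.val_injective] using hx, x, rfl⟩
  rw [himage, Set.ncard_image_of_injective _ (Sym2.map.injective Subtype.val_injective),
    ← Nat.card_coe_set_eq, edgeSet_top]
  exact Sym2.natCard_subtype_not_diag _

lemma ncard_edgeSet_top_sdiff_sym2_compl [Finite V] (S : Set V) :
    ((⊤ : SimpleGraph V).edgeSet \ Sᶜ.sym2).ncard =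
      S.ncard.choose 2 + S.ncard * Sᶜ.ncard := by
  have hsplit := Set.ncard_sdiff_add_ncard_of_subset
    (Set.inter_subset_left : (⊤ : SimpleGraph V).edgeSet ∩ Sᶜ.sym2 ⊆ _)
  have htop := ncard_edgeSet_top_inter_sym2 (V := V) Set.univ
  rw [Set.sdiff_self_inter, ncard_edgeSet_top_inter_sym2] at hsplit
  rw [Set.sym2_univ, Set.inter_univ, Set.ncard_univ, ← S.ncard_add_ncard_compl,
    Nat.add_choose_two] at htop
  omega

lemma ncard_edgeSet_deleteEdges_sdiff_add_le [Finite V] {G : SimpleGraph V}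
    {M M₀ X : Set (Sym2 V)} (hM₀M : M₀ ⊆ M) (hM₀ : M₀ ⊆ G.edgeSet \ X) :
    ((G.deleteEdges M).edgeSet \ X).ncard + M₀.ncard ≤ (G.edgeSet \ X).ncard := by
  have hdisj : Disjoint ((G.deleteEdges M).edgeSet \ X) M₀ :=
    Set.disjoint_left.2 fun e he he₀ => by
      rw [edgeSet_deleteEdges] at he
      exact he.1.2 (hM₀M he₀)
  rw [← Set.ncard_union_eq hdisj]
  exact Set.ncard_le_ncard (Set.union_subset
    (Set.sdiff_subset_sdiff_left (edgeSet_mono (deleteEdges_le _))) hM₀)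

namespace Subgraph

variable {G : SimpleGraph V} {T : G.Subgraph}

lemma edgeSet_subset_edgeSet_top_inter_sym2_verts :
    T.edgeSet ⊆ (⊤ : SimpleGraph V).edgeSet ∩ T.verts.sym2 :=
  fun _ he => ⟨G.edgeSet_mono le_top (T.edgeSet_subset he),
    Set.mem_sym2_iff_subset.2 fun _ hv => T.mem_verts_of_mem_edge he hv⟩

lemma ncard_edgeSet_add_one_of_isTree [Finite V] (hT : T.coe.IsTree) :
    T.edgeSet.ncard + 1 = T.verts.ncard := by
  rw [← T.image_coe_edgeSet_coe,
    Set.ncard_image_of_injective _ (Sym2.map.injective Subtype.val_injective)]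
  exact (isTree_iff_connected_and_card.1 hT).2

lemma ncard_le_ncard_edgeSet_sdiff_sym2_compl [Finite V] (hT : T.coe.Preconnected) {A : Set V}
    (hA : A ⊆ T.verts) {u : V} (hu : u ∈ T.verts) (huA : u ∉ A) :
    A.ncard ≤ (T.edgeSet \ Aᶜ.sym2).ncard := by
  have hreach : ∀ a ∈ A, T.spanningCoe.Reachable a u := fun a ha =>
    (hT ⟨a, hA ha⟩ ⟨u, hu⟩).map ⟨Subtype.val, id⟩
  simpa only [edgeSet_spanningCoe] using
    SimpleGraph.ncard_le_ncard_edgeSet_sdiff_sym2_compl huA hreach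

end Subgraph

end SimpleGraph

section SteinerTree

variable [Finite V] {G : SimpleGraph V} {S : Set V}

lemma IsSteinerTree.ncard_edgeSet_add_one_of_verts_eq {T : G.Subgraph}
    (hT : IsSteinerTree G S T) (heq : T.verts = S) : T.edgeSet.ncard + 1 = S.ncard :=
  heq ▸ T.ncard_edgeSet_add_one_of_isTree hT.2

lemma IsSteinerTree.ncard_le_ncard_edgeSet_sdiff_add {T : G.Subgraph} (hT : IsSteinerTree G S T) :
    S.ncard ≤ (T.edgeSet \ Sᶜ.sym2).ncard + if T.verts = S then 1 else 0 := by
  split_ifs with heq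
  · have hinside : T.edgeSet ⊆ S.sym2 :=
      heq ▸ T.edgeSet_subset_edgeSet_top_inter_sym2_verts.trans Set.inter_subset_right
    rw [sdiff_eq_left.2 (S.disjoint_sym2_sym2_compl.mono_left hinside),
      hT.ncard_edgeSet_add_one_of_verts_eq heq]
  · obtain ⟨u, hu, huS⟩ := Set.exists_of_ssubset (hT.1.ssubset_of_ne (Ne.symm heq))
    exact T.ncard_le_ncard_edgeSet_sdiff_sym2_compl hT.2.connected.preconnected hT.1 hu huS

lemma card_filter_verts_eq_le_of_steinerTrees (hS : 2 ≤ S.ncard) {t : ℕ}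
    {f : Fin t → G.Subgraph} (htree : ∀ i, IsSteinerTree G S (f i))
    (hdisj : ∀ i j, i ≠ j → Disjoint (f i).edgeSet (f j).edgeSet) :
    (Finset.univ.filter fun i => (f i).verts = S).card ≤ S.ncard / 2 := by
  set R := Finset.univ.filter fun i => (f i).verts = S
  have hR : R.card * (S.ncard - 1) ≤ S.ncard.choose 2 := by
    rw [← SimpleGraph.ncard_edgeSet_top_inter_sym2, ← smul_eq_mul, ← Finset.sum_const]
    calc ∑ _i ∈ R, (S.ncard - 1) = ∑ i ∈ R, (f i).edgeSet.ncard :=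
          Finset.sum_congr rfl fun i hi => by
            have := (htree i).ncard_edgeSet_add_one_of_verts_eq (Finset.mem_filter.1 hi).2
            omega
      _ ≤ _ := Set.sum_ncard_le_ncard_of_pairwiseDisjoint (Set.toFinite _)
          (fun i _ j _ hij => hdisj i j hij)
          fun i hi =>
            (Finset.mem_filter.1 hi).2 ▸ (f i).edgeSet_subset_edgeSet_top_inter_sym2_verts
  rw [Nat.choose_two_right, Nat.le_div_iff_mul_le two_pos] at hR
  rw [Nat.le_div_iff_mul_le two_pos]
  exact Nat.le_of_mul_le_mul_right (by linarith) (by omega : 0 < S.ncard - 1)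

lemma mul_ncard_le_of_steinerTrees (hS : 2 ≤ S.ncard) {t : ℕ} {f : Fin t → G.Subgraph}
    (htree : ∀ i, IsSteinerTree G S (f i))
    (hdisj : ∀ i j, i ≠ j → Disjoint (f i).edgeSet (f j).edgeSet) :
    t * S.ncard ≤ (G.edgeSet \ Sᶜ.sym2).ncard + S.ncard / 2 := by
  have hunion : ∑ i, ((f i).edgeSet \ Sᶜ.sym2).ncard ≤ (G.edgeSet \ Sᶜ.sym2).ncard :=
    Set.sum_ncard_le_ncard_of_pairwiseDisjoint (Set.toFinite _)
      (fun i _ j _ hij => (hdisj i j hij).mono Set.sdiff_subset Set.sdiff_subset)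
      fun i _ => Set.sdiff_subset_sdiff_left (f i).edgeSet_subset
  calc t * S.ncard = ∑ _i : Fin t, S.ncard := by simp
    _ ≤ ∑ i, (((f i).edgeSet \ Sᶜ.sym2).ncard + if (f i).verts = S then 1 else 0) :=
        Finset.sum_le_sum fun i _ => (htree i).ncard_le_ncard_edgeSet_sdiff_add
    _ = ∑ i, ((f i).edgeSet \ Sᶜ.sym2).ncard +
          (Finset.univ.filter fun i => (f i).verts = S).card := by
        rw [Finset.sum_add_distrib, Finset.sum_boole, Nat.cast_id]
    _ ≤ (G.edgeSet \ Sᶜ.sym2).ncard + S.ncard / 2 :=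
        add_le_add hunion (card_filter_verts_eq_le_of_steinerTrees hS htree hdisj)

lemma steinerEdgeConn_mul_ncard_le (hS : 2 ≤ S.ncard) :
    steinerEdgeConn G S * S.ncard ≤ (G.edgeSet \ Sᶜ.sym2).ncard + S.ncard / 2 := by
  have hbound : steinerEdgeConn G S ≤ ((G.edgeSet \ Sᶜ.sym2).ncard + S.ncard / 2) / S.ncard :=
    csSup_le' fun _ ⟨_, htree, hdisj⟩ => (Nat.le_div_iff_mul_le (by omega)).2
      (mul_ncard_le_of_steinerTrees hS htree hdisj)
  exact (Nat.le_div_iff_mul_le (by omega)).1 hbound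

end SteinerTree

theorem genEdgeConn_complete_minus_edges (n k : ℕ) (hk : Odd k) (h3 : 3 ≤ k) (hkn : k ≤ n)
    (M : Set (Sym2 (Fin n))) (hM : M ⊆ (⊤ : SimpleGraph (Fin n)).edgeSet)
    (hMcard : (k + 1) / 2 ≤ M.ncard) :
    genEdgeConn ((⊤ : SimpleGraph (Fin n)).deleteEdges M) k < n - (k + 1) / 2 := by
  obtain ⟨j, rfl⟩ := hk
  obtain ⟨m, rfl⟩ : ∃ m, n = m + (2 * j + 1) := ⟨n - (2 * j + 1), by omega⟩
  rw [show (2 * j + 1 + 1) / 2 = j + 1 by omega] at hMcard ⊢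
  set G := (⊤ : SimpleGraph (Fin (m + (2 * j + 1)))).deleteEdges M
  obtain ⟨M₀, hM₀M, hM₀card⟩ := Set.exists_subset_card_eq hMcard
  obtain ⟨S, hScard, hM₀S⟩ :=
    Set.exists_ncard_eq_disjoint_sym2_compl (M := M₀) (k := 2 * j + 1) (by omega) (by simp)
  have hScompl : Sᶜ.ncard = m := Set.ncard_compl_of_ncard_eq_add S (by simp [hScard])
  have hmissing := SimpleGraph.ncard_edgeSet_deleteEdges_sdiff_add_le hM₀M
    (Set.subset_sdiff.2 ⟨hM₀M.trans hM, hM₀S⟩)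
  have htop := SimpleGraph.ncard_edgeSet_top_sdiff_sym2_compl S
  rw [hScard, hScompl, Nat.choose_two_two_mul_add_one] at htop
  have hsteiner := steinerEdgeConn_mul_ncard_le (G := G) (S := S) (by omega)
  rw [hScard, show (2 * j + 1) / 2 = j by omega] at hsteiner
  have hle : genEdgeConn G (2 * j + 1) ≤ steinerEdgeConn G S := Nat.sInf_le ⟨S, hScard, rfl⟩
  have hlt : steinerEdgeConn G S < m + j :=
    Nat.lt_of_mul_lt_mul_right (a := 2 * j + 1) (by nlinarith)
  omega
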